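/- Let g be an element of Thompson's group V with N(g) ≥ 4. Then N(g)−1 ≤ N(g·x0^{−1}) ≤ N(g)+1. Moreover: (1) if ℓ1(g) = 1 then N(g·x0^{−1}) = N(g)+1 and ℓ1(g·x0^{−1}) = 1; (2) if ℓ1(g) ≠ 1 then N(g·x0^{−1}) = N(g) or N(g·x0^{−1}) = N(g)−1, and ℓ1(g·x0^{−1}) = ℓ1(g)−1; (3) if ℓ1(g) ≠ 1 and either the word 0 or the word 10 is a strict prefix of the range code of some branch of g, then N(g·x0^{−1}) = N(g) and the word 0 is a strict prefix of the range code of some branch of g·x0^{−1}. -/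

import Mathlib

/-!
Formalization framework for Thompson's groups `F ≤ T ≤ V` acting on the
Cantor set `{0,1}^ℕ`.  Elements of `V` are permutations of the Cantor set
admitting a finite table of branches `u → v` (complete prefix codes) with
`g(uω) = vω`.  Products in the paper are composed left-to-right, i.e. the
paper's `g·h` is `Equiv.trans g h` (equivalently `h * g` in `Equiv.Perm`).
-/

abbrev CSeq : Type := ℕ → Bool
abbrev VPerm : Type := Equiv.Perm CSeq

/-- Concatenation of a finite binary word with an infinite binary word. -/
def app (u : List Bool) (ω : CSeq) : CSeq := fun n =>
  if h : n < u.length then u[n] else ω (n - u.length)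

/-- The finite word `u` is a prefix of the infinite word `ω`. -/
def IsPref (u : List Bool) (ω : CSeq) : Prop := ∃ ω', ω = app u ω'

/-- The finite table of branches `T` represents the permutation `g` of the
Cantor set: the domain codes and the range codes each form a complete prefix
code, and `g` maps `uω ↦ vω` for every branch `(u, v) ∈ T`. -/
def Represents (g : VPerm) (T : Finset (List Bool × List Bool)) : Prop :=
  (∀ ω : CSeq, ∃! p : List Bool × List Bool, p ∈ T ∧ IsPref p.1 ω) ∧
  (∀ ω : CSeq, ∃! p : List Bool × List Bool, p ∈ T ∧ IsPref p.2 ω) ∧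
  (∀ p ∈ T, ∀ ω : CSeq, g (app p.1 ω) = app p.2 ω)

/-- A table of branches is reduced if it contains no pair of branches
`u0 → v0`, `u1 → v1`. -/
def Reduced (T : Finset (List Bool × List Bool)) : Prop :=
  ∀ u v : List Bool,
    ¬((u ++ [false], v ++ [false]) ∈ T ∧ (u ++ [true], v ++ [true]) ∈ T)

/-- Membership in Thompson's group `V`. -/
def InV (g : VPerm) : Prop := ∃ T, Represents g T

/-- `u → v` is a branch of the (unique) reduced representation of `g`. -/
def IsBranch (g : VPerm) (u v : List Bool) : Prop :=
  ∃ T, Represents g T ∧ Reduced T ∧ (u, v) ∈ T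

/-- `N(g)`: the number of branches of the reduced representation of `g`. -/
noncomputable def Nbr (g : VPerm) : ℕ :=
  sInf {n | ∃ T, Represents g T ∧ Reduced T ∧ T.card = n}

/-- `ℓ0(g)`: the unique `ℓ ≥ 1` such that `0^ℓ` is the range code of some
branch of `g`. -/
noncomputable def ell0 (g : VPerm) : ℕ :=
  sInf {ℓ | 1 ≤ ℓ ∧ ∃ u, IsBranch g u (List.replicate ℓ false)}

/-- `ℓ1(g)`: the unique `ℓ ≥ 1` such that `1^ℓ` is the range code of some
branch of `g`. -/
noncomputable def ell1 (g : VPerm) : ℕ :=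
  sInf {ℓ | 1 ≤ ℓ ∧ ∃ u, IsBranch g u (List.replicate ℓ true)}

/-- `w` is a strict prefix of the range code of some branch of `g`. -/
def StrictPrefOfBranch (g : VPerm) (w : List Bool) : Prop :=
  ∃ u v, IsBranch g u v ∧ w <+: v ∧ w ≠ v

/-- Strict lexicographic order on infinite binary words. -/
def lexLt (a b : CSeq) : Prop :=
  ∃ n, (∀ i < n, a i = b i) ∧ a n = false ∧ b n = true

/-- Membership in Thompson's group `F`: an element of `V` preserving the
(lexicographic) order of the Cantor set. -/
def InF (g : VPerm) : Prop :=
  InV g ∧ ∀ a b : CSeq, lexLt a b → lexLt (g a) (g b)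

/-- `(a, b, c)` is a (strict) cyclically ordered triple. -/
def cyc3 (a b c : CSeq) : Prop :=
  (lexLt a b ∧ lexLt b c) ∨ (lexLt b c ∧ lexLt c a) ∨ (lexLt c a ∧ lexLt a b)

/-- Membership in Thompson's group `T`: an element of `V` preserving the
cyclic order of the Cantor set. -/
def InT (g : VPerm) : Prop :=
  InV g ∧ ∀ a b c : CSeq, cyc3 a b c → cyc3 (g a) (g b) (g c)

/-- Word length of `g` with respect to the generating set `S` (letters are
elements of `S` or inverses of elements of `S`). -/
noncomputable def wlen (S : Set VPerm) (g : VPerm) : ℕ :=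
  sInf {n | ∃ l : List VPerm,
    l.length = n ∧ (∀ x ∈ l, x ∈ S ∨ x⁻¹ ∈ S) ∧ l.prod = g}

/-- `h'` is the copy `h_{[u]}` of `h` supported on the cylinder of `u`. -/
def IsCopy (h : VPerm) (u : List Bool) (h' : VPerm) : Prop :=
  (∀ ω : CSeq, h' (app u ω) = app u (h ω)) ∧
  (∀ ω : CSeq, ¬ IsPref u ω → h' ω = ω)

/-- Evaluation (left-to-right) of the word `w` starting at the element `g`:
the paper's product `g · w`. -/
def wordEval (g : VPerm) (w : List VPerm) : VPerm :=
  w.foldl (fun a b => a.trans b) g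

/-- Branches of the generator `x0`: `00→0`, `01→10`, `1→11`. -/
def x0T : Finset (List Bool × List Bool) :=
  {([false, false], [false]), ([false, true], [true, false]),
   ([true], [true, true])}

/-- Branches of the generator `x1`: `0→0`, `100→10`, `101→110`, `11→111`. -/
def x1T : Finset (List Bool × List Bool) :=
  {([false], [false]), ([true, false, false], [true, false]),
   ([true, false, true], [true, true, false]),
   ([true, true], [true, true, true])}

/-- Branches of the generator `c1`: `0→10`, `10→11`, `11→0`. -/
def c1T : Finset (List Bool × List Bool) :=
  {([false], [true, false]), ([true, false], [true, true]),
   ([true, true], [false])}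

/-- Branches of the generator `π0`: `0→10`, `10→0`, `11→11`. -/
def pi0T : Finset (List Bool × List Bool) :=
  {([false], [true, false]), ([true, false], [false]),
   ([true, true], [true, true])}

/-- The standard generators `x_j`, `j ≥ 0`, of `F`: for `r ≥ 1`,
`x_{r+1} = x0^{-r} · x1 · x0^{r}` in the left-to-right convention of the
paper, i.e. `x0 ^ r * x1 * (x0⁻¹) ^ r` in `Equiv.Perm`. -/
def xseq (x0 x1 : VPerm) : ℕ → VPerm
  | 0 => x0
  | r + 1 => x0 ^ r * x1 * (x0⁻¹) ^ r

/-!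
Right multiplication by `x0⁻¹` only rewrites range codes: `x0⁻¹` replaces the prefixes
`0, 10, 11` by `00, 01, 1`. Let `T` be the reduced table of `g`.

If `T` has a branch `u → 1`, split it into `u0 → 10, u1 → 11` first; rewriting the range codes
then gives a reduced table of `g·x0⁻¹` with one branch more, among them `u1 → 1`.
Otherwise rewriting keeps the number of branches and turns `1^m` into `1^(m-1)`. The result is
reduced unless `T` contains a pair `a0 → 0, a1 → 10`, which becomes `a0 → 00, a1 → 01` and
merges into `a → 0`; after this single merge the table is reduced, since a further merge would
need the range codes `0` and `1`, i.e. at most two branches, while `N(g) ≥ 4`.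
Reduced tables are unique, so `N` and `ℓ1` of `g·x0⁻¹` can be read off these tables.
-/

section Words

lemma app_append (u v : List Bool) (ω : CSeq) : app (u ++ v) ω = app u (app v ω) := by
  funext n
  simp only [app, List.length_append]
  by_cases h1 : n < u.length
  · rw [dif_pos (by omega), dif_pos h1, List.getElem_append_left h1]
  · by_cases h2 : n < u.length + v.length
    · rw [dif_pos h2, dif_neg h1, dif_pos (by omega), List.getElem_append_right (by omega)]
    · rw [dif_neg (by omega), dif_neg h1, dif_neg (by omega)]
      congr 1; omega

lemma app_apply_of_lt {u : List Bool} {ω : CSeq} {n : ℕ} (h : n < u.length) :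
    app u ω n = u[n] :=
  dif_pos h

lemma app_apply_of_le {u : List Bool} {ω : CSeq} {n : ℕ} (h : u.length ≤ n) :
    app u ω n = ω (n - u.length) :=
  dif_neg (by omega)

lemma app_cons_tail (ω : CSeq) : app [ω 0] (fun n => ω (n + 1)) = ω := by
  funext n
  cases n with
  | zero => rfl
  | succ m => rw [app_apply_of_le (by simp)]; rfl

lemma eq_of_forall_app_eq {u v : List Bool} (h : ∀ ω, app u ω = app v ω) : u = v := by
  have hlen : u.length = v.length := by
    by_contra hne
    rcases Nat.lt_or_gt_of_ne hne with hlt | hlt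
    · have := congrFun (h fun _ => !v[u.length]) u.length
      rw [app_apply_of_le le_rfl, app_apply_of_lt hlt] at this
      simp at this
    · have := congrFun (h fun _ => !u[v.length]) v.length
      rw [app_apply_of_lt hlt, app_apply_of_le le_rfl] at this
      simp at this
  refine List.ext_getElem hlen fun i h1 h2 => ?_
  have := congrFun (h fun _ => false) i
  rwa [app_apply_of_lt h1, app_apply_of_lt h2] at this

lemma isPref_iff {u : List Bool} {ω : CSeq} :
    IsPref u ω ↔ ∀ i (h : i < u.length), ω i = u[i] := by
  constructor
  · rintro ⟨ω', rfl⟩ i h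
    exact app_apply_of_lt h
  · intro h
    refine ⟨fun n => ω (n + u.length), funext fun n => ?_⟩
    by_cases hn : n < u.length
    · rw [app_apply_of_lt hn, h n hn]
    · rw [app_apply_of_le (by omega), Nat.sub_add_cancel (by omega)]

lemma isPref_app (u : List Bool) (ω : CSeq) : IsPref u (app u ω) := ⟨ω, rfl⟩

lemma IsPref.of_prefix {u v : List Bool} {ω : CSeq} (h : u <+: v) (hv : IsPref v ω) :
    IsPref u ω := by
  rw [isPref_iff] at hv ⊢
  intro i hi
  rw [hv i (lt_of_lt_of_le hi h.length_le), h.getElem hi]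

lemma IsPref.prefix_or_prefix {u v : List Bool} {ω : CSeq} (hu : IsPref u ω)
    (hv : IsPref v ω) : u <+: v ∨ v <+: u := by
  rw [isPref_iff] at hu hv
  wlog h : u.length ≤ v.length generalizing u v
  · exact (this hv hu (by omega)).symm
  refine Or.inl (List.prefix_iff_eq_take.2 (List.ext_getElem (by simp [h]) fun i h1 h2 => ?_))
  rw [List.getElem_take, ← hu i h1, hv i (by omega)]

lemma isPref_append_singleton_iff {u : List Bool} {b : Bool} {ω : CSeq} :
    IsPref (u ++ [b]) ω ↔ IsPref u ω ∧ ω u.length = b := by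
  simp only [isPref_iff, List.length_append, List.length_singleton, Nat.lt_succ_iff_lt_or_eq]
  constructor
  · intro h
    refine ⟨fun i hi => by rw [h i (Or.inl hi), List.getElem_append_left hi], ?_⟩
    simpa using h u.length (Or.inr rfl)
  · rintro ⟨h, hb⟩ i (hi | rfl)
    · rw [h i hi, List.getElem_append_left hi]
    · simpa using hb

lemma eq_replicate_of_isPref_const {v : List Bool} {b : Bool}
    (h : IsPref v fun _ => b) : v = List.replicate v.length b := by
  rw [isPref_iff] at h
  refine List.eq_replicate_of_mem fun x hx => ?_
  obtain ⟨i, hi, rfl⟩ := List.getElem_of_mem hx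
  exact (h i hi).symm

end Words

section PrefixCode

variable {β : Type*} {code : β → List Bool} {S : Finset β}

/-- The first two conjuncts of `Represents g T` are, definitionally,
`IsCompletePrefixCode Prod.fst T` and `IsCompletePrefixCode Prod.snd T`. -/
def IsCompletePrefixCode (code : β → List Bool) (S : Finset β) : Prop :=
  ∀ ω, ∃! p, p ∈ S ∧ IsPref (code p) ω

lemma IsCompletePrefixCode.eq_of_prefix (h : IsCompletePrefixCode code S) {p q : β}
    (hp : p ∈ S) (hq : q ∈ S) (hpq : code p <+: code q) : p = q := by
  obtain ⟨r, -, hr⟩ := h (app (code q) fun _ => false)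
  exact (hr p ⟨hp, (isPref_app _ _).of_prefix hpq⟩).trans (hr q ⟨hq, isPref_app _ _⟩).symm

open scoped Classical in
lemma isCompletePrefixCode_iff_card_filter :
    IsCompletePrefixCode code S ↔ ∀ ω, (S.filter fun p => IsPref (code p) ω).card = 1 := by
  simp only [IsCompletePrefixCode, Finset.card_eq_one_iff_existsUnique, Finset.mem_filter]

lemma IsCompletePrefixCode.image {γ : Type*} [DecidableEq γ] {code' : γ → List Bool}
    {F : β → γ} (h : IsCompletePrefixCode (code' ∘ F) S) (hF : Set.InjOn F S) :
    IsCompletePrefixCode code' (S.image F) := by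
  classical
  rw [isCompletePrefixCode_iff_card_filter] at h ⊢
  intro ω
  rw [Finset.filter_image, Finset.card_image_of_injOn (hF.mono (Finset.filter_subset _ _))]
  exact h ω

lemma isCompletePrefixCode_insert_iff_split [DecidableEq β] {R : Finset β} {p q₀ q₁ : β}
    (hp : p ∉ R) (hq₀ : q₀ ∉ insert q₁ R) (hq₁ : q₁ ∉ R) (h₀ : code q₀ = code p ++ [false])
    (h₁ : code q₁ = code p ++ [true]) :
    IsCompletePrefixCode code (insert p R) ↔
      IsCompletePrefixCode code (insert q₀ (insert q₁ R)) := by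
  classical
  simp only [isCompletePrefixCode_iff_card_filter, Finset.card_filter, Finset.sum_insert hp,
    Finset.sum_insert hq₀, Finset.sum_insert hq₁, h₀, h₁, ← add_assoc]
  suffices hsplit : ∀ ω, (if IsPref (code p) ω then 1 else 0) =
      (if IsPref (code p ++ [false]) ω then 1 else 0) +
        (if IsPref (code p ++ [true]) ω then 1 else 0) by
    simp only [hsplit]
  intro ω
  simp only [isPref_append_singleton_iff]
  cases ω (code p).length <;> by_cases IsPref (code p) ω <;> simp [*]

end PrefixCode

section Representations

abbrev Table : Type := Finset (List Bool × List Bool)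

def MapsCylinder (g : VPerm) (u v : List Bool) : Prop := ∀ ω, g (app u ω) = app v ω

variable {g : VPerm} {T : Table}

lemma MapsCylinder.right_unique {u v v' : List Bool} (h : MapsCylinder g u v)
    (h' : MapsCylinder g u v') : v = v' :=
  eq_of_forall_app_eq fun ω => by rw [← h ω, ← h' ω]

lemma MapsCylinder.append {u v : List Bool} (h : MapsCylinder g u v) (s : List Bool) :
    MapsCylinder g (u ++ s) (v ++ s) := fun ω => by
  rw [app_append, h, app_append]

lemma mapsCylinder_iff_split {u v : List Bool} :
    MapsCylinder g u v ↔ MapsCylinder g (u ++ [false]) (v ++ [false]) ∧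
      MapsCylinder g (u ++ [true]) (v ++ [true]) := by
  refine ⟨fun h => ⟨h.append _, h.append _⟩, fun ⟨h₀, h₁⟩ ω => ?_⟩
  rw [← app_cons_tail ω, ← app_append, ← app_append]
  cases ω 0
  exacts [h₀ _, h₁ _]

lemma represents_iff :
    Represents g T ↔ IsCompletePrefixCode Prod.fst T ∧ ∀ p ∈ T, MapsCylinder g p.1 p.2 := by
  refine ⟨fun h => ⟨h.1, h.2.2⟩, fun ⟨hdom, hmaps⟩ => ⟨hdom, fun ω => ?_, hmaps⟩⟩
  obtain ⟨p, ⟨hpT, ω₁, hω₁⟩, hp⟩ := hdom (g.symm ω)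
  refine ⟨p, ⟨hpT, ω₁, ?_⟩, fun q ⟨hqT, ω₂, hω₂⟩ => hp q ⟨hqT, ω₂, ?_⟩⟩
  · rw [← hmaps p hpT, ← hω₁, Equiv.apply_symm_apply]
  · exact g.injective (by rw [Equiv.apply_symm_apply, hmaps q hqT, hω₂])

lemma represents_insert_iff_split {R : Table} {u v : List Bool} (hp : (u, v) ∉ R)
    (h₀ : (u ++ [false], v ++ [false]) ∉ R) (h₁ : (u ++ [true], v ++ [true]) ∉ R) :
    Represents g (insert (u, v) R) ↔
      Represents g (insert (u ++ [false], v ++ [false]) (insert (u ++ [true], v ++ [true]) R)) := by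
  have h₀' : (u ++ [false], v ++ [false]) ∉ insert (u ++ [true], v ++ [true]) R := by
    simp [h₀]
  simp only [represents_iff, Finset.forall_mem_insert, mapsCylinder_iff_split (u := u), and_assoc,
    isCompletePrefixCode_insert_iff_split (code := Prod.fst) hp h₀' h₁ rfl rfl]

namespace Represents

variable (hT : Represents g T)
include hT

lemma eq_of_fst_prefix {p q : List Bool × List Bool} (hp : p ∈ T) (hq : q ∈ T)
    (h : p.1 <+: q.1) : p = q :=
  IsCompletePrefixCode.eq_of_prefix hT.1 hp hq h

lemma eq_of_snd_prefix {p q : List Bool × List Bool} (hp : p ∈ T) (hq : q ∈ T)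
    (h : p.2 <+: q.2) : p = q :=
  IsCompletePrefixCode.eq_of_prefix hT.2.1 hp hq h

lemma mapsCylinder {u v : List Bool} (h : (u, v) ∈ T) : MapsCylinder g u v :=
  hT.2.2 _ h

lemma append_notMem {u v : List Bool} (hu : (u, v) ∈ T) {s w : List Bool} (hs : s ≠ []) :
    (u ++ s, w) ∉ T := fun h => hs <| by
  simpa using congrArg (·.1) (hT.eq_of_fst_prefix hu h (List.prefix_append _ _))

lemma snd_ne_nil (hcard : 2 ≤ T.card) {p : List Bool × List Bool} (hp : p ∈ T) : p.2 ≠ [] := by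
  intro hnil
  have : T.card ≤ 1 := Finset.card_le_one.2 fun q hq r hr =>
    (hT.eq_of_snd_prefix hp hq (by simp [hnil])).symm.trans
      (hT.eq_of_snd_prefix hp hr (by simp [hnil]))
  omega

lemma card_le_two {u₀ u₁ : List Bool} (h₀ : (u₀, [false]) ∈ T) (h₁ : (u₁, [true]) ∈ T) :
    T.card ≤ 2 := by
  have hsub : T ⊆ {(u₀, [false]), (u₁, [true])} := by
    rintro ⟨u, v⟩ hp
    rw [Finset.mem_insert, Finset.mem_singleton]
    match v with
    | [] => exact .inl (hT.eq_of_snd_prefix hp h₀ (by simp))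
    | false :: w => exact .inl (hT.eq_of_snd_prefix h₀ hp ⟨w, rfl⟩).symm
    | true :: w => exact .inr (hT.eq_of_snd_prefix h₁ hp ⟨w, rfl⟩).symm
  exact (Finset.card_le_card hsub).trans Finset.card_le_two

end Represents

end Representations

section ReducedRepresentation

variable {g : VPerm} {T : Table}

lemma Represents.exists_sibling (hT : Represents g T) {x y : List Bool} {b : Bool}
    (hxb : (x ++ [b], y) ∈ T) (hmax : ∀ p ∈ T, x <+: p.1 → p.1.length ≤ x.length + 1) :
    ∃ y', (x ++ [!b], y') ∈ T := by
  obtain ⟨⟨u, y'⟩, ⟨hq, hpref⟩, -⟩ := hT.1 (app (x ++ [!b]) fun _ => false)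
  dsimp only at hpref
  refine ⟨y', ?_⟩
  rcases hpref.prefix_or_prefix (isPref_app _ _) with h | h
  · rcases List.prefix_concat_iff.1 h with rfl | hux
    · exact hq
    · obtain ⟨r, rfl⟩ := hux
      exact absurd (by simpa using hxb) (hT.append_notMem hq (s := r ++ [b]) (by simp))
  · have hlen := hmax _ hq ((List.prefix_append _ _).trans h)
    have hlen' := h.length_le
    simp only [List.length_append, List.length_singleton] at hlen hlen'
    obtain rfl : x ++ [!b] = u := h.eq_of_length (by simp; omega)
    exact hq

/-- No branch of a reduced representation lies strictly inside a cylinder on which `g` acts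
as a prefix replacement: a longest such branch and its sibling would form a reducible pair. -/
lemma Represents.notMem_of_mapsCylinder (hT : Represents g T) (hred : Reduced T)
    {w v : List Bool} (hw : MapsCylinder g w v) {s y : List Bool} (hs : s ≠ []) :
    (w ++ s, y) ∉ T := by
  intro hmem
  have hinside : ∀ t y', (w ++ t, y') ∈ T → y' = v ++ t := fun t y' h =>
    ((hw.append t).right_unique (hT.mapsCylinder h)).symm
  obtain ⟨⟨p₁, p₂⟩, hp, hmax⟩ := (T.filter (w <+: ·.1)).exists_max_image (·.1.length)
    ⟨_, Finset.mem_filter.2 ⟨hmem, List.prefix_append _ _⟩⟩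
  obtain ⟨hpT, t', rfl⟩ := Finset.mem_filter.1 hp
  obtain ⟨t, b, rfl⟩ : ∃ t b, t' = t ++ [b] := by
    refine (List.eq_nil_or_concat' t').resolve_left ?_
    rintro rfl
    exact hT.append_notMem (by simpa using hpT) hs hmem
  have hbranch : ∀ c y', (w ++ t ++ [c], y') ∈ T → (w ++ t ++ [c], v ++ t ++ [c]) ∈ T := by
    intro c y' h
    rw [List.append_assoc] at h
    rwa [List.append_assoc w, List.append_assoc v, ← hinside _ _ h]
  have hb : (w ++ t ++ [b], p₂) ∈ T := by rwa [List.append_assoc]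
  obtain ⟨y', hb'⟩ := hT.exists_sibling hb fun q hq hq' => by
    have : q.1.length ≤ (w ++ (t ++ [b])).length :=
      hmax q (Finset.mem_filter.2 ⟨hq, (List.prefix_append _ _).trans hq'⟩)
    simp only [List.length_append, List.length_singleton] at this ⊢
    omega
  have h₀ := hbranch _ _ hb
  have h₁ := hbranch _ _ hb'
  cases b
  exacts [hred _ _ ⟨h₀, h₁⟩, hred _ _ ⟨h₁, h₀⟩]

lemma Represents.subset_of_reduced (hT : Represents g T) (hred : Reduced T) {T' : Table}
    (hT' : Represents g T') (hred' : Reduced T') : T ⊆ T' := by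
  rintro ⟨u, v⟩ hp
  obtain ⟨⟨u', v'⟩, ⟨hq, hpref⟩, -⟩ := hT'.1 (app u fun _ => false)
  rcases hpref.prefix_or_prefix (isPref_app _ _) with ⟨s, rfl⟩ | ⟨s, rfl⟩
  · rcases eq_or_ne s [] with rfl | hs
    · rw [List.append_nil] at hp ⊢
      rwa [(hT.mapsCylinder hp).right_unique (hT'.mapsCylinder hq)]
    · exact absurd hp (hT.notMem_of_mapsCylinder hred (hT'.mapsCylinder hq) hs)
  · rcases eq_or_ne s [] with rfl | hs
    · rw [List.append_nil] at hq
      rwa [(hT.mapsCylinder hp).right_unique (hT'.mapsCylinder hq)]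
    · exact absurd hq (hT'.notMem_of_mapsCylinder hred' (hT.mapsCylinder hp) hs)

lemma Represents.eq_of_reduced (hT : Represents g T) (hred : Reduced T) {T' : Table}
    (hT' : Represents g T') (hred' : Reduced T') : T = T' :=
  (hT.subset_of_reduced hred hT' hred').antisymm (hT'.subset_of_reduced hred' hT hred)

lemma Represents.isBranch_iff (hT : Represents g T) (hred : Reduced T) {u v : List Bool} :
    IsBranch g u v ↔ (u, v) ∈ T :=
  ⟨fun ⟨_, hT', hred', h⟩ => hT'.eq_of_reduced hred' hT hred ▸ h, fun h => ⟨T, hT, hred, h⟩⟩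

lemma Represents.nbr_eq (hT : Represents g T) (hred : Reduced T) : Nbr g = T.card := by
  have : {n | ∃ T', Represents g T' ∧ Reduced T' ∧ T'.card = n} = {T.card} := by
    ext n
    constructor
    · rintro ⟨T', hT', hred', rfl⟩
      rw [hT'.eq_of_reduced hred' hT hred, Set.mem_singleton_iff]
    · rintro rfl
      exact ⟨T, hT, hred, rfl⟩
  rw [Nbr, this, csInf_singleton]

lemma exists_reduced_of_nbr_pos (h : 0 < Nbr g) :
    ∃ T, Represents g T ∧ Reduced T ∧ T.card = Nbr g :=
  Nat.sInf_mem (Nat.nonempty_of_pos_sInf h)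

lemma isPref_replicate (n : ℕ) (b : Bool) : IsPref (List.replicate n b) fun _ => b :=
  isPref_iff.2 fun i h => by simp

lemma Represents.ell1_eq (hT : Represents g T) (hred : Reduced T) {u : List Bool} {m : ℕ}
    (hm : 1 ≤ m) (h : (u, List.replicate m true) ∈ T) : ell1 g = m := by
  have : {ℓ | 1 ≤ ℓ ∧ ∃ u, IsBranch g u (List.replicate ℓ true)} = {m} := by
    ext ℓ
    simp only [hT.isBranch_iff hred, Set.mem_ofPred_eq, Set.mem_singleton_iff]
    refine ⟨fun ⟨_, u', h'⟩ => ?_, fun hℓ => ⟨hℓ ▸ hm, u, hℓ ▸ h⟩⟩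
    rcases (isPref_replicate ℓ true).prefix_or_prefix (isPref_replicate m true) with hc | hc
    · simpa using congrArg (·.2.length) (hT.eq_of_snd_prefix h' h hc)
    · simpa using congrArg (·.2.length) (hT.eq_of_snd_prefix h h' hc).symm
  rw [ell1, this, csInf_singleton]

lemma Represents.exists_mem_replicate_true (hT : Represents g T) (hcard : 2 ≤ T.card) :
    ∃ u m, 1 ≤ m ∧ (u, List.replicate m true) ∈ T := by
  obtain ⟨⟨u, v⟩, ⟨hp, hpref⟩, -⟩ := hT.2.1 fun _ => true
  refine ⟨u, v.length, List.length_pos_iff.2 (hT.snd_ne_nil hcard hp), ?_⟩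
  rwa [← eq_replicate_of_isPref_const hpref]

lemma Represents.not_strictPrefOfBranch (hT : Represents g T) (hred : Reduced T)
    {u w : List Bool} (h : (u, w) ∈ T) : ¬ StrictPrefOfBranch g w := by
  rintro ⟨u', v', hbr, hpre, hne⟩
  exact hne (congrArg Prod.snd (hT.eq_of_snd_prefix h ((hT.isBranch_iff hred).1 hbr) hpre))

end ReducedRepresentation

section X0Inverse

/-- The prefix replacement `0 ↦ 00, 10 ↦ 01, 11 ↦ 1` performed by `x0⁻¹`. Its values at `[]` and
`[true]`, on whose cylinders `x0⁻¹` is not a prefix replacement, are junk. -/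
def x0invWord : List Bool → List Bool
  | false :: w => false :: false :: w
  | true :: false :: w => false :: true :: w
  | true :: true :: w => true :: w
  | w => w

def x0Word : List Bool → List Bool
  | false :: false :: w => false :: w
  | false :: true :: w => true :: false :: w
  | true :: w => true :: true :: w
  | w => w

lemma x0Word_x0invWord : ∀ {v : List Bool}, v ≠ [] → v ≠ [true] → x0Word (x0invWord v) = v
  | [], h, _ | [true], _, h => absurd rfl h
  | false :: _, _, _ | true :: false :: _, _, _ | true :: true :: _, _, _ => rfl

lemma x0Word_append : ∀ {y : List Bool} (s : List Bool), y ≠ [] → y ≠ [false] →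
    x0Word (y ++ s) = x0Word y ++ s
  | [], _, h, _ | [false], _, _, h => absurd rfl h
  | false :: false :: _, _, _, _ | false :: true :: _, _, _, _ | true :: _, _, _, _ => rfl

lemma x0Word_ne_true (y : List Bool) : x0Word y ≠ [true] := by
  rcases y with _ | ⟨_ | _, _ | ⟨_ | _, _⟩⟩ <;> simp [x0Word]

lemma x0invWord_ne_false (v : List Bool) : x0invWord v ≠ [false] := by
  rcases v with _ | ⟨_ | _, _ | ⟨_ | _, _⟩⟩ <;> simp [x0invWord]

lemma x0invWord_eq_append_pair {v₁ v₂ y : List Bool} (h₁ : x0invWord v₁ = y ++ [false])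
    (h₂ : x0invWord v₂ = y ++ [true]) :
    (∃ z, z ≠ [true] ∧ v₁ = z ++ [false] ∧ v₂ = z ++ [true]) ∨
      (v₁ = [false] ∧ v₂ = [true, false]) := by
  have hy : y ≠ [] := by
    rintro rfl
    exact x0invWord_ne_false v₁ h₁
  have hv₁ : v₁ ≠ [] ∧ v₁ ≠ [true] := by
    constructor <;> rintro rfl <;> simpa [x0invWord] using congrArg List.getLast? h₁
  have hv₂ : v₂ ≠ [] ∧ v₂ ≠ [true] := by
    constructor <;> rintro rfl <;> simp [x0invWord, hy] at h₂
  rw [← x0Word_x0invWord hv₁.1 hv₁.2, ← x0Word_x0invWord hv₂.1 hv₂.2, h₁, h₂]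
  by_cases hy₀ : y = [false]
  · exact .inr (by simp [hy₀, x0Word])
  · exact .inl ⟨x0Word y, x0Word_ne_true y, x0Word_append _ hy hy₀, x0Word_append _ hy hy₀⟩

lemma x0invWord_replicate_true {m : ℕ} (hm : 2 ≤ m) :
    x0invWord (List.replicate m true) = List.replicate (m - 1) true := by
  obtain ⟨k, rfl⟩ := Nat.exists_eq_add_of_le' hm
  rfl

lemma x0invWord_strictly_extends_false {v : List Bool}
    (h : [false] <+: v ∨ [true, false] <+: v) :
    [false] <+: x0invWord v ∧ [false] ≠ x0invWord v := by
  rcases h with ⟨w, rfl⟩ | ⟨w, rfl⟩ <;> simp [x0invWord]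

variable {x0 g : VPerm} {T : Table}

lemma MapsCylinder.inv {u v : List Bool} (h : MapsCylinder g u v) : MapsCylinder g⁻¹ v u :=
  fun ω => by rw [← h ω]; exact g.symm_apply_apply _

lemma mapsCylinder_x0inv (hx0 : Represents x0 x0T) :
    ∀ {v : List Bool}, v ≠ [] → v ≠ [true] → MapsCylinder x0⁻¹ v (x0invWord v)
  | [], h, _ | [true], _, h => absurd rfl h
  | false :: w, _, _ => ((hx0.mapsCylinder (by simp [x0T])).inv.append w :
      MapsCylinder x0⁻¹ ([false] ++ w) ([false, false] ++ w))
  | true :: false :: w, _, _ => ((hx0.mapsCylinder (by simp [x0T])).inv.append w :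
      MapsCylinder x0⁻¹ ([true, false] ++ w) ([false, true] ++ w))
  | true :: true :: w, _, _ => ((hx0.mapsCylinder (by simp [x0T])).inv.append w :
      MapsCylinder x0⁻¹ ([true, true] ++ w) ([true] ++ w))

def mapRange (f : List Bool → List Bool) (T : Table) : Table := T.image (Prod.map id f)

lemma mem_mapRange {f : List Bool → List Bool} {u w : List Bool} :
    (u, w) ∈ mapRange f T ↔ ∃ v, (u, v) ∈ T ∧ f v = w := by
  simp [mapRange]

lemma Represents.injOn_map_id (hT : Represents g T) (f : List Bool → List Bool) :
    Set.InjOn (Prod.map id f) (T : Set (List Bool × List Bool)) := fun _ hp _ hq h =>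
  hT.eq_of_fst_prefix hp hq (congrArg Prod.fst h ▸ List.prefix_refl _)

lemma Represents.card_mapRange (hT : Represents g T) (f : List Bool → List Bool) :
    (mapRange f T).card = T.card :=
  Finset.card_image_of_injOn (hT.injOn_map_id f)

lemma Represents.trans_x0inv (hT : Represents g T) (hx0 : Represents x0 x0T)
    (hcard : 2 ≤ T.card) (hno : ∀ u, (u, [true]) ∉ T) :
    Represents (g.trans x0⁻¹) (mapRange x0invWord T) := by
  refine represents_iff.2
    ⟨IsCompletePrefixCode.image hT.1 (hT.injOn_map_id _), fun ⟨u, w⟩ hp ω => ?_⟩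
  obtain ⟨v, hv, rfl⟩ := mem_mapRange.1 hp
  have hv₁ : v ≠ [true] := by
    rintro rfl
    exact hno u hv
  rw [Equiv.trans_apply, hT.mapsCylinder hv, mapsCylinder_x0inv hx0 (hT.snd_ne_nil hcard hv) hv₁]

lemma reduced_mapRange_x0invWord
    (hpair : ∀ x z, z ≠ [true] → (x ++ [false], z ++ [false]) ∈ T →
      (x ++ [true], z ++ [true]) ∉ T)
    (hspecial : ∀ x, (x ++ [false], [false]) ∈ T → (x ++ [true], [true, false]) ∉ T) :
    Reduced (mapRange x0invWord T) := by
  rintro x y ⟨h₁, h₂⟩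
  obtain ⟨v₁, hv₁, e₁⟩ := mem_mapRange.1 h₁
  obtain ⟨v₂, hv₂, e₂⟩ := mem_mapRange.1 h₂
  rcases x0invWord_eq_append_pair e₁ e₂ with ⟨z, hz, rfl, rfl⟩ | ⟨rfl, rfl⟩
  exacts [hpair x z hz hv₁ hv₂, hspecial x hv₁ hv₂]

end X0Inverse

section Cases

variable {x0 g : VPerm} {T : Table}

lemma Represents.split_true (hT : Represents g T) {u : List Bool} (hu : (u, [true]) ∈ T) :
    Represents g (insert (u ++ [false], [true, false])
      (insert (u ++ [true], [true, true]) (T.erase (u, [true])))) := by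
  have hnot : ∀ b w, (u ++ [b], w) ∉ T.erase (u, [true]) := fun _ _ h =>
    hT.append_notMem hu (by simp) (Finset.mem_of_mem_erase h)
  exact (represents_insert_iff_split (Finset.notMem_erase _ _) (hnot _ _) (hnot _ _)).1
    (by rwa [Finset.insert_erase hu])

lemma Represents.nbr_trans_x0inv_of_mem_true (hT : Represents g T) (hx0 : Represents x0 x0T)
    (hred : Reduced T) (hcard : 2 ≤ T.card) {u : List Bool} (hu : (u, [true]) ∈ T) :
    Nbr (g.trans x0⁻¹) = T.card + 1 ∧ ell1 (g.trans x0⁻¹) = 1 := by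
  set R := T.erase (u, [true])
  have hRT : R ⊆ T := Finset.erase_subset _ _
  have hnot : ∀ b w, (u ++ [b], w) ∉ R := fun _ _ h => hT.append_notMem hu (by simp) (hRT h)
  set S := insert (u ++ [false], [true, false]) (insert (u ++ [true], [true, true]) R)
  have hS : Represents g S := hT.split_true hu
  have hcardS : S.card = T.card + 1 := by
    rw [Finset.card_insert_of_notMem (by simp [hnot]), Finset.card_insert_of_notMem (hnot _ _),
      Finset.card_erase_of_mem hu]
    omega
  have hno : ∀ u', (u', [true]) ∉ S := by
    intro u' h
    simp only [S, Finset.mem_insert, Prod.mk.injEq] at h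
    rcases h with ⟨-, h⟩ | ⟨-, h⟩ | h
    · simp at h
    · simp at h
    · exact Finset.notMem_erase _ _ (hT.eq_of_snd_prefix hu (hRT h) (List.prefix_refl _) ▸ h)
  have hred' : Reduced (mapRange x0invWord S) := by
    refine reduced_mapRange_x0invWord (fun x z hz h₀ h₁ => ?_) (fun x _ h₁ => ?_)
    · simp only [S, Finset.mem_insert, Prod.mk.injEq] at h₀ h₁
      rcases h₀ with ⟨-, h⟩ | ⟨h, -⟩ | h₀
      · exact hz (List.append_left_inj [false] |>.1 h)
      · simpa using congrArg List.getLast? h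
      rcases h₁ with ⟨h, -⟩ | ⟨-, h⟩ | h₁
      · simpa using congrArg List.getLast? h
      · exact hz (List.append_left_inj [true] |>.1 h)
      exact hred x z ⟨hRT h₀, hRT h₁⟩
    · simp only [S, Finset.mem_insert, Prod.mk.injEq] at h₁
      rcases h₁ with ⟨h, -⟩ | ⟨-, h⟩ | h₁
      · simpa using congrArg List.getLast? h
      · simp at h
      · simpa using hT.eq_of_snd_prefix hu (hRT h₁) ⟨[false], rfl⟩
  have hT' := hS.trans_x0inv hx0 (by omega) hno
  refine ⟨by rw [hT'.nbr_eq hred', hS.card_mapRange, hcardS],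
    hT'.ell1_eq hred' (u := u ++ [true]) le_rfl (mem_mapRange.2 ⟨[true, true], by simp [S], rfl⟩)⟩

lemma Represents.nbr_trans_x0inv_of_not_special (hT : Represents g T) (hx0 : Represents x0 x0T)
    (hred : Reduced T) (hcard : 2 ≤ T.card) (hno : ∀ u, (u, [true]) ∉ T)
    (hspecial : ∀ x, (x ++ [false], [false]) ∈ T → (x ++ [true], [true, false]) ∉ T)
    {u : List Bool} {m : ℕ} (hm : 2 ≤ m) (hu : (u, List.replicate m true) ∈ T) :
    Nbr (g.trans x0⁻¹) = T.card ∧ ell1 (g.trans x0⁻¹) = m - 1 ∧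
      (StrictPrefOfBranch g [false] ∨ StrictPrefOfBranch g [true, false] →
        StrictPrefOfBranch (g.trans x0⁻¹) [false]) := by
  have hT' := hT.trans_x0inv hx0 hcard hno
  have hred' := reduced_mapRange_x0invWord (fun x z _ h₀ h₁ => hred x z ⟨h₀, h₁⟩) hspecial
  refine ⟨by rw [hT'.nbr_eq hred', hT.card_mapRange],
    hT'.ell1_eq hred' (by omega) (mem_mapRange.2 ⟨_, hu, x0invWord_replicate_true hm⟩), ?_⟩
  intro hpre
  obtain ⟨u', v, hv, hpre⟩ : ∃ u' v, (u', v) ∈ T ∧ ([false] <+: v ∨ [true, false] <+: v) := by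
    rcases hpre with ⟨u', v, hbr, hpre, -⟩ | ⟨u', v, hbr, hpre, -⟩
    exacts [⟨u', v, (hT.isBranch_iff hred).1 hbr, .inl hpre⟩,
      ⟨u', v, (hT.isBranch_iff hred).1 hbr, .inr hpre⟩]
  exact ⟨u', x0invWord v, (hT'.isBranch_iff hred').2 (mem_mapRange.2 ⟨v, hv, rfl⟩),
    x0invWord_strictly_extends_false hpre⟩

lemma Represents.trans_x0inv_merge (hT : Represents g T) (hx0 : Represents x0 x0T)
    (hcard : 2 ≤ T.card) (hno : ∀ u, (u, [true]) ∉ T) {a : List Bool}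
    (h₀ : (a ++ [false], [false]) ∈ T) (h₁ : (a ++ [true], [true, false]) ∈ T) :
    Represents (g.trans x0⁻¹) (insert (a, [false]) (mapRange x0invWord
      ((T.erase (a ++ [false], [false])).erase (a ++ [true], [true, false])))) := by
  set R := (T.erase (a ++ [false], [false])).erase (a ++ [true], [true, false])
  have hRT : R ⊆ T := (Finset.erase_subset _ _).trans (Finset.erase_subset _ _)
  have hTR : insert (a ++ [false], [false]) (insert (a ++ [true], [true, false]) R) = T := by
    rw [Finset.insert_erase (Finset.mem_erase.2 ⟨by simp, h₁⟩), Finset.insert_erase h₀]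
  have hT' := hT.trans_x0inv hx0 hcard hno
  rw [← hTR, mapRange, Finset.image_insert, Finset.image_insert] at hT'
  have hnot : ∀ b v, (a ++ [b], v) ∉ mapRange x0invWord R := fun b v h => by
    obtain ⟨v', hv', -⟩ := mem_mapRange.1 h
    cases b
    · rw [hT.eq_of_fst_prefix (hRT hv') h₀ (List.prefix_refl _)] at hv'
      simp [R] at hv'
    · rw [hT.eq_of_fst_prefix (hRT hv') h₁ (List.prefix_refl _)] at hv'
      simp [R] at hv'
  have hnot' : (a, [false]) ∉ mapRange x0invWord R := fun h => by
    obtain ⟨v', hv', -⟩ := mem_mapRange.1 h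
    exact hT.append_notMem (hRT hv') (by simp) h₀
  exact (represents_insert_iff_split hnot' (hnot _ _) (hnot _ _)).2 hT'

lemma Represents.nbr_trans_x0inv_of_special (hT : Represents g T) (hx0 : Represents x0 x0T)
    (hred : Reduced T) (hcard : 4 ≤ T.card) (hno : ∀ u, (u, [true]) ∉ T) {a : List Bool}
    (h₀ : (a ++ [false], [false]) ∈ T) (h₁ : (a ++ [true], [true, false]) ∈ T)
    {u : List Bool} {m : ℕ} (hm : 2 ≤ m) (hu : (u, List.replicate m true) ∈ T) :
    Nbr (g.trans x0⁻¹) = T.card - 1 ∧ ell1 (g.trans x0⁻¹) = m - 1 := by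
  set R := (T.erase (a ++ [false], [false])).erase (a ++ [true], [true, false])
  have hRT : R ⊆ T := (Finset.erase_subset _ _).trans (Finset.erase_subset _ _)
  set T₃ := insert (a, [false]) (mapRange x0invWord R)
  have hT₃ : Represents (g.trans x0⁻¹) T₃ := hT.trans_x0inv_merge hx0 (by omega) hno h₀ h₁
  have hnew : (a, [false]) ∉ mapRange x0invWord R := fun h => by
    obtain ⟨v', hv', -⟩ := mem_mapRange.1 h
    exact hT.append_notMem (hRT hv') (by simp) h₀
  have hcard₃ : T₃.card = T.card - 1 := by
    rw [Finset.card_insert_of_notMem hnew, mapRange,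
      Finset.card_image_of_injOn ((hT.injOn_map_id _).mono hRT),
      Finset.card_erase_of_mem (Finset.mem_erase.2 ⟨by simp, h₁⟩), Finset.card_erase_of_mem h₀]
    omega
  have hred₃ : Reduced T₃ := by
    have hredR : Reduced (mapRange x0invWord R) := by
      refine reduced_mapRange_x0invWord (fun x z _ h h' => hred x z ⟨hRT h, hRT h'⟩)
        fun x h _ => ?_
      rw [← hT.eq_of_snd_prefix h₀ (hRT h) (List.prefix_refl _)] at h
      simp [R] at h
    rintro x y ⟨hx₀, hx₁⟩
    rcases Finset.mem_insert.1 hx₁ with h | hx₁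
    · simpa using congrArg List.getLast? (congrArg Prod.snd h)
    rcases Finset.mem_insert.1 hx₀ with h | hx₀
    · obtain rfl : y = [] := by simpa using congrArg Prod.snd h
      have := hT₃.card_le_two (Finset.mem_insert_self _ _) (Finset.mem_insert_of_mem hx₁)
      omega
    · exact hredR x y ⟨hx₀, hx₁⟩
  refine ⟨by rw [hT₃.nbr_eq hred₃, hcard₃], hT₃.ell1_eq hred₃ (u := u) (by omega) ?_⟩
  refine Finset.mem_insert_of_mem (mem_mapRange.2 ⟨_, ?_, x0invWord_replicate_true hm⟩)
  refine Finset.mem_erase.2 ⟨fun h => ?_, Finset.mem_erase.2 ⟨fun h => ?_, hu⟩⟩ <;>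
    simpa using congrArg (false ∈ ·.2) h

end Cases

theorem stmt6_general (x0 : VPerm) (hx0 : Represents x0 x0T)
    (g : VPerm) (hN : 4 ≤ Nbr g) :
    (Nbr g - 1 ≤ Nbr (g.trans x0⁻¹) ∧ Nbr (g.trans x0⁻¹) ≤ Nbr g + 1) ∧
    (ell1 g = 1 → Nbr (g.trans x0⁻¹) = Nbr g + 1 ∧ ell1 (g.trans x0⁻¹) = 1) ∧
    (ell1 g ≠ 1 →
      (Nbr (g.trans x0⁻¹) = Nbr g ∨ Nbr (g.trans x0⁻¹) = Nbr g - 1) ∧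
      ell1 (g.trans x0⁻¹) = ell1 g - 1) ∧
    (ell1 g ≠ 1 →
      (StrictPrefOfBranch g [false] ∨ StrictPrefOfBranch g [true, false]) →
      Nbr (g.trans x0⁻¹) = Nbr g ∧
      StrictPrefOfBranch (g.trans x0⁻¹) [false]) := by
  obtain ⟨T, hT, hred, hcard⟩ := exists_reduced_of_nbr_pos (g := g) (by omega)
  by_cases hone : ∃ u, (u, [true]) ∈ T
  · obtain ⟨u, hu⟩ := hone
    have hell : ell1 g = 1 := hT.ell1_eq hred le_rfl hu
    obtain ⟨hN', hell'⟩ := hT.nbr_trans_x0inv_of_mem_true hx0 hred (by omega) hu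
    exact ⟨⟨by omega, by omega⟩, fun _ => ⟨by omega, hell'⟩, fun h => (h hell).elim,
      fun h => (h hell).elim⟩
  push Not at hone
  obtain ⟨u, m, hm, hu⟩ := hT.exists_mem_replicate_true (by omega)
  have hm2 : 2 ≤ m := by
    by_contra! h
    exact hone u (by rwa [show m = 1 by omega] at hu)
  have hell : ell1 g = m := hT.ell1_eq hred hm hu
  by_cases hspecial : ∃ a, (a ++ [false], [false]) ∈ T ∧ (a ++ [true], [true, false]) ∈ T
  · obtain ⟨a, h₀, h₁⟩ := hspecial
    obtain ⟨hN', hell'⟩ := hT.nbr_trans_x0inv_of_special hx0 hred (by omega) hone h₀ h₁ hm2 hu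
    exact ⟨⟨by omega, by omega⟩, fun h => by omega, fun _ => ⟨.inr (by omega), by omega⟩,
      fun _ hpre => (hpre.elim (hT.not_strictPrefOfBranch hred h₀)
        (hT.not_strictPrefOfBranch hred h₁)).elim⟩
  · push Not at hspecial
    obtain ⟨hN', hell', hpre'⟩ :=
      hT.nbr_trans_x0inv_of_not_special hx0 hred (by omega) hone hspecial hm2 hu
    exact ⟨⟨by omega, by omega⟩, fun h => by omega, fun _ => ⟨.inl (by omega), by omega⟩,
      fun _ hpre => ⟨by omega, hpre' hpre⟩⟩

/-- For `g ∈ V` with `N(g) ≥ 4`: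
`N(g)−1 ≤ N(g·x0⁻¹) ≤ N(g)+1`; (1) if `ℓ1(g) = 1` then `N(g·x0⁻¹) = N(g)+1`
and `ℓ1(g·x0⁻¹) = 1`; (2) if `ℓ1(g) ≠ 1` then `N(g·x0⁻¹) ∈ {N(g), N(g)−1}`
and `ℓ1(g·x0⁻¹) = ℓ1(g)−1`; (3) if `ℓ1(g) ≠ 1` and `0` or `10` is a strict
prefix of the range code of some branch of `g`, then `N(g·x0⁻¹) = N(g)` and
`0` is a strict prefix of the range code of some branch of `g·x0⁻¹`. -/
theorem stmt6 (x0 : VPerm) (hx0 : Represents x0 x0T)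
    (g : VPerm) (hg : InV g) (hN : 4 ≤ Nbr g) :
    (Nbr g - 1 ≤ Nbr (g.trans x0⁻¹) ∧ Nbr (g.trans x0⁻¹) ≤ Nbr g + 1) ∧
    (ell1 g = 1 → Nbr (g.trans x0⁻¹) = Nbr g + 1 ∧ ell1 (g.trans x0⁻¹) = 1) ∧
    (ell1 g ≠ 1 →
      (Nbr (g.trans x0⁻¹) = Nbr g ∨ Nbr (g.trans x0⁻¹) = Nbr g - 1) ∧
      ell1 (g.trans x0⁻¹) = ell1 g - 1) ∧
    (ell1 g ≠ 1 →
      (StrictPrefOfBranch g [false] ∨ StrictPrefOfBranch g [true, false]) →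
      Nbr (g.trans x0⁻¹) = Nbr g ∧
      StrictPrefOfBranch (g.trans x0⁻¹) [false]) :=
  stmt6_general x0 hx0 g hN
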